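/- Let p, p', q, q' ≥ 0 satisfy p + p' = 1 and q + q' = 1, let λ, ε > 0, μ = √(λ(λε² + 2)), w₊ = λε² + με + 1 and w₋ = λε² − με + 1. Then the determinant of the 2×2 matrix with rows (−p, 1 − q'·w₋) and (w₊ − p', −q·w₋) equals −2λε² − ε(p + q)(μ − λε), and this quantity is strictly negative. -/
import Mathlib


open MeasureTheory Real Filter

theorem stmt7 (p p' q q' : ℝ) (hp : 0 ≤ p) (hp' : 0 ≤ p') (hq : 0 ≤ q) (hq' : 0 ≤ q')
    (hpp : p + p' = 1) (hqq : q + q' = 1)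
    (l ε : ℝ) (hl : 0 < l) (hε : 0 < ε) (μ wp wm : ℝ)
    (hμ : μ = Real.sqrt (l * (l * ε^2 + 2)))
    (hwp : wp = l * ε^2 + μ * ε + 1) (hwm : wm = l * ε^2 - μ * ε + 1) :
    Matrix.det !![-p, 1 - q' * wm; wp - p', -(q * wm)]
        = -(2 * l * ε^2) - ε * (p + q) * (μ - l * ε) ∧
    Matrix.det !![-p, 1 - q' * wm; wp - p', -(q * wm)] < 0 := by
  have harg : 0 ≤ l * (l * ε^2 + 2) := by positivity
  have hμ0 : 0 ≤ μ := hμ ▸ Real.sqrt_nonneg _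
  have hμsq : μ ^ 2 = l * (l * ε^2 + 2) := by
    rw [hμ, sq, Real.mul_self_sqrt harg]
  have hμgt : l * ε ≤ μ := by
    nlinarith [sq_nonneg (μ - l * ε), sq_nonneg (μ + l * ε)]
  have hdet : Matrix.det !![-p, 1 - q' * wm; wp - p', -(q * wm)]
      = -(2 * l * ε^2) - ε * (p + q) * (μ - l * ε) := by
    rw [Matrix.det_fin_two_of]
    have hp'e : p' = 1 - p := by linarith
    have hq'e : q' = 1 - q := by linarith
    subst hp'e hq'e hwp hwm
    linear_combination (-(1-q) * ε^2) * hμsq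
  refine ⟨hdet, ?_⟩
  rw [hdet]
  have h1 : 0 ≤ ε * (p + q) * (μ - l * ε) :=
    mul_nonneg (mul_nonneg hε.le (by linarith)) (by linarith)
  have h2 : 0 < 2 * l * ε^2 := by positivity
  linarith
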